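/- Let A be an m×n real matrix, b ∈ ℝ^m, Φ(x) = (1/2)‖Ax − b‖₂², and let L be a Lipschitz constant of ∇Φ. Let γ > 0 and β > 2L, suppose some component of Aᵀb is strictly positive, and let (x^k, y^k, z^k) be an ADMM_p sequence with X = {x ∈ ℝ^n : xᵢ ≥ 0 for all i} such that {x^k} is bounded, so that x^k converges to some x^∞ ∈ X with x^∞ ≠ 0. Write Λ = supp(x^∞) = {i : x^∞ᵢ ≠ 0}, q^∞ = Aᵀ(Ax^∞ − b), a = ‖x^∞‖₁, r = ‖x^∞‖₂. Assume the nondegeneracy condition: γ·(1/r − (a/r³)·x^∞ᵢ) + q^∞ᵢ = 0 for every i ∈ Λ, and q^∞ᵢ + γ/r > 0 for every i ∉ Λ. Then there exists K such that supp(x^k) = Λ for all k ≥ K. -/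

import Mathlib

noncomputable section
open Classical

/-- The ℓ¹ norm on ℝ^n. -/
def l1 {n : ℕ} (x : EuclideanSpace ℝ (Fin n)) : ℝ := ∑ i, |x i|

/-- The ratio ‖x‖₁/‖x‖₂ with the convention that it equals 1 at the origin. -/
def ratio {n : ℕ} (x : EuclideanSpace ℝ (Fin n)) : ℝ :=
  if x = 0 then 1 else l1 x / ‖x‖

/-- `(x, y, z)` is an ADMM_p sequence for data `(β, γ, X, Φ)`:
at every step, `x^{k+1}` globally minimizes the proximal subproblem of the ratio `‖·‖₁/‖·‖₂`
over `X`, `y^{k+1}` globally minimizes the `Φ`-subproblem, and `z` is updated by the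
multiplier rule. -/
def ADMMpSeq {n : ℕ} (β γ : ℝ) (X : Set (EuclideanSpace ℝ (Fin n)))
    (Φ : EuclideanSpace ℝ (Fin n) → ℝ)
    (x y z : ℕ → EuclideanSpace ℝ (Fin n)) : Prop :=
  ∀ k : ℕ,
    (x (k + 1) ∈ X ∧ ∀ u ∈ X,
      ratio (x (k + 1)) + β / (2 * γ) * ‖x (k + 1) - (y k - β⁻¹ • z k)‖ ^ 2 ≤
        ratio u + β / (2 * γ) * ‖u - (y k - β⁻¹ • z k)‖ ^ 2) ∧
    (∀ u : EuclideanSpace ℝ (Fin n),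
      Φ (y (k + 1)) + β / 2 * ‖y (k + 1) - x (k + 1) - β⁻¹ • z k‖ ^ 2 ≤
        Φ u + β / 2 * ‖u - x (k + 1) - β⁻¹ • z k‖ ^ 2) ∧
    z (k + 1) = z k + β • (x (k + 1) - y (k + 1))

/-- Matrix–vector multiplication as a map between Euclidean spaces. -/
def mv {m n : ℕ} (A : Matrix (Fin m) (Fin n) ℝ) (x : EuclideanSpace ℝ (Fin n)) :
    EuclideanSpace ℝ (Fin m) :=
  (WithLp.equiv 2 (Fin m → ℝ)).symm (A.mulVec (WithLp.equiv 2 (Fin n → ℝ) x))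

/-!
The `y`-update minimizes a strongly convex quadratic, so its optimality condition reads
`z^{k+1} = ∇Φ(y^{k+1})`. The multiplier update then becomes the recursion
`(AᵀA + β)(y^{k+1} - x^∞) = AᵀA (y^k - x^∞) + β (x^{k+1} - x^∞)`, a contraction with factor
`L / β < 1` perturbed by a null sequence; hence `y^k → x^∞` and `z^k → q^∞`.

For `i ∉ Λ`, compare the prox point `x^{k+1}` with the same point with its `i`-th coordinate set to
zero. If `x^{k+1}_i > 0`, the optimality inequality gives
`1 / ‖x^{k+1}‖ - (β / γ) (y^k - z^k / β)_i ≤ O(x^{k+1}_i)`. The left side tends to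
`1 / r + q^∞_i / γ`, which the nondegeneracy condition makes positive, and the right side to `0`;
so `x^{k+1}_i = 0` eventually. For `i ∈ Λ` the coordinate is eventually nonzero simply because
`x^k → x^∞`.
-/

open Filter Topology RealInnerProductSpace

lemma tendsto_zero_of_le_mul_add {a b : ℕ → ℝ} {ρ : ℝ} (hρ₀ : 0 ≤ ρ) (hρ₁ : ρ < 1)
    (ha : ∀ k, 0 ≤ a k) (hab : ∀ k, a (k + 1) ≤ ρ * a k + b k)
    (hb : Tendsto b atTop (𝓝 0)) : Tendsto a atTop (𝓝 0) := by
  refine tendsto_order.2 ⟨fun ε hε => .of_forall fun k => hε.trans_le (ha k), fun ε hε => ?_⟩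
  obtain ⟨N, hN⟩ :=
    eventually_atTop.1 (hb.eventually_lt_const (by positivity : 0 < ε * (1 - ρ) / 2))
  have hbound : ∀ k ≥ N, a k ≤ ρ ^ (k - N) * a N + ε / 2 := by
    intro k hk
    induction k, hk using Nat.le_induction with
    | base => simp only [Nat.sub_self, pow_zero, one_mul]; linarith
    | succ k hk ih =>
      rw [Nat.sub_add_comm hk, pow_succ]
      nlinarith [hab k, hN k hk]
  have hgeom : Tendsto (fun k => ρ ^ (k - N) * a N) atTop (𝓝 0) := by
    simpa using ((tendsto_pow_atTop_nhds_zero_of_lt_one hρ₀ hρ₁).comp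
      (tendsto_sub_atTop_nat N)).mul_const (a N)
  filter_upwards [hgeom.eventually_lt_const (half_pos hε), eventually_ge_atTop N] with k hk hkN
  linarith [hbound k hkN]

lemma eq_zero_of_forall_mul_add_sq_mul_nonneg {a c : ℝ} (hc : 0 ≤ c)
    (h : ∀ t : ℝ, 0 ≤ t * a + t ^ 2 * c) : a = 0 := by
  have := h (-a / (c + 1))
  field_simp at this
  nlinarith [sq_nonneg a]

section InnerProductSpace

variable {E F : Type*} [NormedAddCommGroup E] [InnerProductSpace ℝ E]
  [NormedAddCommGroup F] [InnerProductSpace ℝ F]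

lemma adjoint_apply_sub_add_smul_eq_zero_of_forall_le [FiniteDimensional ℝ E]
    [FiniteDimensional ℝ F] (T : E →ₗ[ℝ] F) (b : F) {β : ℝ} (hβ : 0 ≤ β) {w p : E}
    (hmin : ∀ u, 1 / 2 * ‖T p - b‖ ^ 2 + β / 2 * ‖p - w‖ ^ 2 ≤
      1 / 2 * ‖T u - b‖ ^ 2 + β / 2 * ‖u - w‖ ^ 2) :
    T.adjoint (T p - b) + β • (p - w) = 0 := by
  set g := T.adjoint (T p - b) + β • (p - w)
  have hfirst : ∀ d, ⟪g, d⟫ = 0 := by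
    intro d
    refine eq_zero_of_forall_mul_add_sq_mul_nonneg
      (c := (‖T d‖ ^ 2 + β * ‖d‖ ^ 2) / 2) (by positivity) fun t => ?_
    have h := hmin (p + t • d)
    rw [map_add, map_smul, add_sub_right_comm, add_sub_right_comm p, norm_add_sq_real,
      norm_add_sq_real, inner_smul_right, inner_smul_right, norm_smul, norm_smul,
      Real.norm_eq_abs, mul_pow, mul_pow, sq_abs] at h
    have hg : ⟪g, d⟫ = ⟪T p - b, T d⟫ + β * ⟪p - w, d⟫ := by
      rw [inner_add_left, LinearMap.adjoint_inner_left, real_inner_smul_left]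
    rw [hg]
    nlinarith
  exact inner_self_eq_zero.1 (hfirst g)

lemma mul_norm_le_norm_add_smul (S : E →ₗ[ℝ] E) (hS : ∀ u, 0 ≤ ⟪S u, u⟫) (β : ℝ) (u : E) :
    β * ‖u‖ ≤ ‖S u + β • u‖ := by
  rcases (norm_nonneg u).eq_or_lt with hu | hu
  · rw [← hu, mul_zero]; exact norm_nonneg _
  refine le_of_mul_le_mul_right ?_ hu
  calc β * ‖u‖ * ‖u‖ ≤ ⟪S u + β • u, u⟫ := by
        rw [inner_add_left, real_inner_smul_left, real_inner_self_eq_norm_mul_norm]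
        linarith [hS u]
    _ ≤ ‖S u + β • u‖ * ‖u‖ := real_inner_le_norm _ _

lemma tendsto_of_add_smul_eq_add_smul (S : E →ₗ[ℝ] E) (hS : ∀ u, 0 ≤ ⟪S u, u⟫) {L β : ℝ}
    (hSL : ∀ u, ‖S u‖ ≤ L * ‖u‖) (hL : 0 ≤ L) (hLβ : L < β) {x y : ℕ → E} {x₀ : E}
    (hxy : ∀ k, S (y (k + 1)) + β • y (k + 1) = S (y k) + β • x (k + 1))
    (hx : Tendsto x atTop (𝓝 x₀)) : Tendsto y atTop (𝓝 x₀) := by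
  have hβ : 0 < β := hL.trans_lt hLβ
  have hstep : ∀ k, ‖y (k + 1) - x₀‖ ≤ L / β * ‖y k - x₀‖ + ‖x (k + 1) - x₀‖ := by
    intro k
    have hres : S (y (k + 1) - x₀) + β • (y (k + 1) - x₀) =
        S (y k - x₀) + β • (x (k + 1) - x₀) := by
      simp only [map_sub, smul_sub]
      rw [← sub_eq_zero, ← sub_eq_zero.2 (hxy k)]
      abel
    have h := mul_norm_le_norm_add_smul S hS β (y (k + 1) - x₀)
    rw [hres] at h
    rw [div_mul_eq_mul_div, ← sub_le_iff_le_add, le_div_iff₀ hβ, mul_comm, mul_sub]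
    calc β * ‖y (k + 1) - x₀‖ - β * ‖x (k + 1) - x₀‖
        ≤ ‖S (y k - x₀) + β • (x (k + 1) - x₀)‖ - ‖β • (x (k + 1) - x₀)‖ := by
          rw [norm_smul, Real.norm_of_nonneg hβ.le]; linarith
      _ ≤ ‖S (y k - x₀)‖ := sub_le_iff_le_add.2 (norm_add_le _ _)
      _ ≤ L * ‖y k - x₀‖ := hSL _
  rw [tendsto_iff_norm_sub_tendsto_zero] at hx ⊢
  exact tendsto_zero_of_le_mul_add (div_nonneg hL hβ.le) ((div_lt_one hβ).2 hLβ)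
    (fun k => norm_nonneg _) hstep ((tendsto_add_atTop_iff_nat 1).2 hx)

end InnerProductSpace

lemma mv_eq_toEuclideanLin {m n : ℕ} (A : Matrix (Fin m) (Fin n) ℝ) :
    mv A = Matrix.toEuclideanLin A :=
  rfl

lemma mv_transpose_eq_adjoint {m n : ℕ} (A : Matrix (Fin m) (Fin n) ℝ) :
    mv A.transpose = LinearMap.adjoint (Matrix.toEuclideanLin A) := by
  rw [← Matrix.toEuclideanLin_conjTranspose_eq_adjoint,
    Matrix.conjTranspose_eq_transpose_of_trivial]
  rfl

section ADMM

variable {m n : ℕ} {A : Matrix (Fin m) (Fin n) ℝ} {b : EuclideanSpace ℝ (Fin m)} {β γ : ℝ}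
  {X : Set (EuclideanSpace ℝ (Fin n))} {x y z : ℕ → EuclideanSpace ℝ (Fin n)}

lemma ADMMpSeq.z_succ_eq (hβ : 0 < β)
    (hADMM : ADMMpSeq β γ X (fun u => 1 / 2 * ‖mv A u - b‖ ^ 2) x y z) (k : ℕ) :
    z (k + 1) = mv A.transpose (mv A (y (k + 1)) - b) := by
  have hstat := adjoint_apply_sub_add_smul_eq_zero_of_forall_le (Matrix.toEuclideanLin A) b
    hβ.le (w := x (k + 1) + β⁻¹ • z k) fun u => by rw [← sub_sub, ← sub_sub]; exact (hADMM k).2.1 u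
  rw [← mv_transpose_eq_adjoint, ← mv_eq_toEuclideanLin] at hstat
  rw [eq_neg_of_add_eq_zero_left hstat, (hADMM k).2.2, smul_sub, smul_sub, smul_add,
    smul_inv_smul₀ hβ.ne']
  abel

lemma ADMMpSeq.tendsto_prox_center
    (hADMM : ADMMpSeq β γ X (fun u => 1 / 2 * ‖mv A u - b‖ ^ 2) x y z) {L : ℝ}
    (hL : ∀ u v, ‖mv A.transpose (mv A u - b) - mv A.transpose (mv A v - b)‖ ≤ L * ‖u - v‖)
    (hL0 : 0 ≤ L) (hLβ : L < β) {x₀ : EuclideanSpace ℝ (Fin n)}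
    (hx : Tendsto x atTop (𝓝 x₀)) :
    Tendsto (fun k => y k - β⁻¹ • z k) atTop
      (𝓝 (x₀ - β⁻¹ • mv A.transpose (mv A x₀ - b))) := by
  have hβ : 0 < β := hL0.trans_lt hLβ
  set T := Matrix.toEuclideanLin A
  have hgrad : ∀ u, mv A.transpose (mv A u - b) = (T.adjoint ∘ₗ T) u - T.adjoint b := by
    intro u; rw [mv_transpose_eq_adjoint, LinearMap.comp_apply, ← map_sub]; rfl
  have hSL : ∀ u, ‖(T.adjoint ∘ₗ T) u‖ ≤ L * ‖u‖ := by
    intro u; simpa [hgrad] using hL u 0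
  have hS : ∀ u, 0 ≤ ⟪(T.adjoint ∘ₗ T) u, u⟫ := by
    intro u; rw [LinearMap.comp_apply, LinearMap.adjoint_inner_left]; exact real_inner_self_nonneg
  have hy : Tendsto y atTop (𝓝 x₀) := by
    refine (tendsto_add_atTop_iff_nat 1).1 (tendsto_of_add_smul_eq_add_smul _ hS hSL hL0 hLβ
      (fun k => ?_) ((tendsto_add_atTop_iff_nat 1).2 hx))
    have hz := (hADMM (k + 1)).2.2
    rw [hADMM.z_succ_eq hβ, hADMM.z_succ_eq hβ, hgrad, hgrad, smul_sub] at hz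
    rw [← sub_eq_zero, ← sub_eq_zero.2 hz]
    abel
  have hz : Tendsto z atTop (𝓝 (mv A.transpose (mv A x₀ - b))) := by
    refine (tendsto_add_atTop_iff_nat 1).1 ?_
    simp only [hADMM.z_succ_eq hβ, hgrad]
    exact ((LinearMap.continuous_of_finiteDimensional _).tendsto x₀).comp
      ((tendsto_add_atTop_iff_nat 1).2 hy) |>.sub tendsto_const_nhds
  exact hy.sub (hz.const_smul β⁻¹)

end ADMM

section EraseCoord

variable {n : ℕ}

def eraseCoord (i : Fin n) (p : EuclideanSpace ℝ (Fin n)) : EuclideanSpace ℝ (Fin n) :=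
  p - p i • EuclideanSpace.single i 1

lemma eraseCoord_apply (i : Fin n) (p : EuclideanSpace ℝ (Fin n)) (j : Fin n) :
    eraseCoord i p j = if j = i then 0 else p j := by
  by_cases h : j = i <;> simp [eraseCoord, h]

lemma continuous_eraseCoord (i : Fin n) : Continuous (eraseCoord i) := by
  unfold eraseCoord; fun_prop

lemma eraseCoord_of_apply_eq_zero {i : Fin n} {p : EuclideanSpace ℝ (Fin n)} (hp : p i = 0) :
    eraseCoord i p = p := by
  simp [eraseCoord, hp]

lemma norm_sq_sub_norm_sq_of_eq_off {i : Fin n} {u v : EuclideanSpace ℝ (Fin n)}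
    (huv : ∀ j, j ≠ i → u j = v j) : ‖u‖ ^ 2 - ‖v‖ ^ 2 = u i ^ 2 - v i ^ 2 := by
  rw [EuclideanSpace.norm_sq_eq, EuclideanSpace.norm_sq_eq, ← Finset.sum_sub_distrib,
    Finset.sum_eq_single i (fun j _ hj => by rw [huv j hj, sub_self]) (by simp)]
  simp

lemma l1_sub_l1_of_eq_off {i : Fin n} {u v : EuclideanSpace ℝ (Fin n)}
    (huv : ∀ j, j ≠ i → u j = v j) : l1 u - l1 v = |u i| - |v i| := by
  rw [l1, l1, ← Finset.sum_sub_distrib,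
    Finset.sum_eq_single i (fun j _ hj => by rw [huv j hj, sub_self]) (by simp)]

lemma continuous_l1 : Continuous (l1 (n := n)) := by
  unfold l1; fun_prop

lemma ratio_of_ne_zero {p : EuclideanSpace ℝ (Fin n)} (hp : p ≠ 0) : ratio p = l1 p / ‖p‖ :=
  if_neg hp

lemma one_div_norm_sub_le_of_ratio_prox {i : Fin n} {c : ℝ} {p v : EuclideanSpace ℝ (Fin n)}
    (hc : 0 ≤ c) (hpi : 0 < p i) (hu : eraseCoord i p ≠ 0)
    (hmin : ratio p + c * ‖p - v‖ ^ 2 ≤ ratio (eraseCoord i p) + c * ‖eraseCoord i p - v‖ ^ 2) :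
    1 / ‖p‖ - 2 * c * v i ≤ l1 (eraseCoord i p) * p i /
      (‖p‖ * ‖eraseCoord i p‖ * (‖p‖ + ‖eraseCoord i p‖)) := by
  set u := eraseCoord i p
  have hoff : ∀ j, j ≠ i → p j = u j := fun j hj => by simp [u, eraseCoord_apply, hj]
  have hui : u i = 0 := by simp [u, eraseCoord_apply]
  have hp : p ≠ 0 := fun h => hpi.ne' (by simp [h])
  have hnorm := norm_sq_sub_norm_sq_of_eq_off hoff
  have hl1 := l1_sub_l1_of_eq_off hoff
  have hdist := norm_sq_sub_norm_sq_of_eq_off (u := p - v) (v := u - v) (i := i)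
    fun j hj => by simp [hoff j hj]
  simp only [hui, PiLp.sub_apply] at hnorm hl1 hdist
  rw [ratio_of_ne_zero hp, ratio_of_ne_zero hu] at hmin
  have hs : 0 < ‖p‖ := norm_pos_iff.2 hp
  have ht : 0 < ‖u‖ := norm_pos_iff.2 hu
  rw [abs_zero, abs_of_pos hpi] at hl1
  have hgap : l1 u / ‖u‖ - l1 u / ‖p‖ = p i * (l1 u * p i / (‖p‖ * ‖u‖ * (‖p‖ + ‖u‖))) := by
    field_simp
    linear_combination l1 u * hnorm
  refine le_of_mul_le_mul_left ?_ hpi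
  calc p i * (1 / ‖p‖ - 2 * c * v i)
      ≤ p i * (1 / ‖p‖ - 2 * c * v i) + c * p i ^ 2 := le_add_of_nonneg_right (by positivity)
    _ ≤ l1 u / ‖u‖ - l1 u / ‖p‖ := by
      rw [show l1 p = l1 u + p i by linarith] at hmin
      linear_combination hmin - c * hdist
    _ = _ := hgap

end EraseCoord

lemma Filter.Tendsto.ofLp_apply {n : ℕ} {p : ℕ → EuclideanSpace ℝ (Fin n)}
    {x₀ : EuclideanSpace ℝ (Fin n)} (hp : Tendsto p atTop (𝓝 x₀)) (i : Fin n) :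
    Tendsto (fun k => p k i) atTop (𝓝 (x₀ i)) :=
  ((PiLp.continuous_apply 2 _ i).tendsto x₀).comp hp

lemma eventually_apply_eq_zero_of_ratio_prox {n : ℕ} {i : Fin n} {c V : ℝ}
    {p v : ℕ → EuclideanSpace ℝ (Fin n)} {x₀ : EuclideanSpace ℝ (Fin n)} (hc : 0 ≤ c)
    (hp : ∀ k, 0 ≤ p k i)
    (hmin : ∀ k, ratio (p k) + c * ‖p k - v k‖ ^ 2 ≤
      ratio (eraseCoord i (p k)) + c * ‖eraseCoord i (p k) - v k‖ ^ 2)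
    (hpx : Tendsto p atTop (𝓝 x₀)) (hx₀ : x₀ ≠ 0) (hx₀i : x₀ i = 0)
    (hv : Tendsto (fun k => v k i) atTop (𝓝 V)) (hV : 2 * c * V < 1 / ‖x₀‖) :
    ∀ᶠ k in atTop, p k i = 0 := by
  have hr : 0 < ‖x₀‖ := norm_pos_iff.2 hx₀
  have hu : Tendsto (fun k => eraseCoord i (p k)) atTop (𝓝 x₀) := by
    have := ((continuous_eraseCoord i).tendsto x₀).comp hpx
    rwa [eraseCoord_of_apply_eq_zero hx₀i] at this
  have hpi : Tendsto (fun k => p k i) atTop (𝓝 0) := hx₀i ▸ hpx.ofLp_apply i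
  have hlhs : Tendsto (fun k => 1 / ‖p k‖ - 2 * c * v k i) atTop (𝓝 (1 / ‖x₀‖ - 2 * c * V)) :=
    (tendsto_const_nhds.div hpx.norm hr.ne').sub (tendsto_const_nhds.mul hv)
  have hrhs : Tendsto (fun k => l1 (eraseCoord i (p k)) * p k i /
      (‖p k‖ * ‖eraseCoord i (p k)‖ * (‖p k‖ + ‖eraseCoord i (p k)‖))) atTop (𝓝 0) := by
    rw [show (0 : ℝ) = l1 x₀ * 0 / (‖x₀‖ * ‖x₀‖ * (‖x₀‖ + ‖x₀‖)) by simp]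
    exact (((continuous_l1.tendsto x₀).comp hu).mul hpi).div
      ((hpx.norm.mul hu.norm).mul (hpx.norm.add hu.norm)) (by positivity)
  filter_upwards [hrhs.eventually_lt hlhs (by linarith), hu.eventually_ne hx₀] with k hlt hne
  by_contra hk
  exact (one_div_norm_sub_le_of_ratio_prox hc ((hp k).lt_of_ne' hk) hne (hmin k)).not_gt hlt

theorem stmt17_general {m n : ℕ} (A : Matrix (Fin m) (Fin n) ℝ) (b : EuclideanSpace ℝ (Fin m))
    (Φ : EuclideanSpace ℝ (Fin n) → ℝ)
    (hΦ : Φ = fun x => 1 / 2 * ‖mv A x - b‖ ^ 2)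
    (L : ℝ)
    (hL : ∀ x y : EuclideanSpace ℝ (Fin n),
      ‖mv A.transpose (mv A x - b) - mv A.transpose (mv A y - b)‖ ≤ L * ‖x - y‖)
    (γ β : ℝ) (hγ : 0 < γ) (hβ : 2 * L < β)
    (X : Set (EuclideanSpace ℝ (Fin n)))
    (hX : X = {v : EuclideanSpace ℝ (Fin n) | ∀ i, 0 ≤ v i})
    (x y z : ℕ → EuclideanSpace ℝ (Fin n))
    (hADMM : ADMMpSeq β γ X Φ x y z)
    (xinf : EuclideanSpace ℝ (Fin n))
    (hconv : Filter.Tendsto x Filter.atTop (nhds xinf))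
    (hxinf : xinf ≠ 0)
    (qinf : EuclideanSpace ℝ (Fin n)) (hq : qinf = mv A.transpose (mv A xinf - b))
    (hnd2 : ∀ i, xinf i = 0 → 0 < qinf i + γ / ‖xinf‖) :
    ∃ K : ℕ, ∀ k ≥ K, ∀ i, x k i ≠ 0 ↔ xinf i ≠ 0 := by
  subst hΦ hX hq
  have hr : 0 < ‖xinf‖ := norm_pos_iff.2 hxinf
  have hL0 : 0 ≤ L :=
    nonneg_of_mul_nonneg_left (by simpa using (norm_nonneg _).trans (hL xinf 0)) hr
  have hβ0 : 0 < β := by linarith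
  have hcenter := hADMM.tendsto_prox_center hL hL0 (by linarith) hconv
  have hx₁ : Tendsto (fun k => x (k + 1)) atTop (𝓝 xinf) := (tendsto_add_atTop_iff_nat 1).2 hconv
  suffices ∀ i, ∀ᶠ k in atTop, (x (k + 1) i ≠ 0 ↔ xinf i ≠ 0) by
    refine eventually_atTop.1 ?_
    rw [← map_add_atTop_eq_nat 1, eventually_map]
    exact eventually_all.2 this
  intro i
  by_cases hi : xinf i = 0
  · refine (eventually_apply_eq_zero_of_ratio_prox (by positivity) (fun k => (hADMM k).1.1 i)
      (fun k => (hADMM k).1.2 _ fun j => ?_) hx₁ hxinf hi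
      (hcenter.ofLp_apply i) ?_).mono fun k hk => iff_of_false (not_not.2 hk) (not_not.2 hi)
    · rw [eraseCoord_apply]; split_ifs; exacts [le_rfl, (hADMM k).1.1 j]
    · have hnd := hnd2 i hi
      simp only [PiLp.sub_apply, PiLp.smul_apply, smul_eq_mul, hi, zero_sub]
      field_simp at hnd ⊢
      linarith
  · exact ((hx₁.ofLp_apply i).eventually_ne hi).mono fun k hk => iff_of_true hk hi

theorem stmt17 {m n : ℕ} (A : Matrix (Fin m) (Fin n) ℝ) (b : EuclideanSpace ℝ (Fin m))
    (Φ : EuclideanSpace ℝ (Fin n) → ℝ)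
    (hΦ : Φ = fun x => 1 / 2 * ‖mv A x - b‖ ^ 2)
    (L : ℝ)
    (hL : ∀ x y : EuclideanSpace ℝ (Fin n),
      ‖mv A.transpose (mv A x - b) - mv A.transpose (mv A y - b)‖ ≤ L * ‖x - y‖)
    (γ β : ℝ) (hγ : 0 < γ) (hβ : 2 * L < β)
    (hAb : ∃ i, 0 < mv A.transpose b i)
    (X : Set (EuclideanSpace ℝ (Fin n)))
    (hX : X = {v : EuclideanSpace ℝ (Fin n) | ∀ i, 0 ≤ v i})
    (x y z : ℕ → EuclideanSpace ℝ (Fin n))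
    (hADMM : ADMMpSeq β γ X Φ x y z)
    (hbdd : ∃ C : ℝ, ∀ k, ‖x k‖ ≤ C)
    (xinf : EuclideanSpace ℝ (Fin n))
    (hconv : Filter.Tendsto x Filter.atTop (nhds xinf))
    (hxX : xinf ∈ X) (hxinf : xinf ≠ 0)
    (qinf : EuclideanSpace ℝ (Fin n)) (hq : qinf = mv A.transpose (mv A xinf - b))
    (hnd1 : ∀ i, xinf i ≠ 0 →
      γ * (1 / ‖xinf‖ - l1 xinf / ‖xinf‖ ^ 3 * xinf i) + qinf i = 0)
    (hnd2 : ∀ i, xinf i = 0 → 0 < qinf i + γ / ‖xinf‖) :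
    ∃ K : ℕ, ∀ k ≥ K, ∀ i, x k i ≠ 0 ↔ xinf i ≠ 0 :=
  stmt17_general A b Φ hΦ L hL γ β hγ hβ X hX x y z hADMM xinf hconv hxinf qinf hq hnd2
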